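/- arXiv:1002.3617 — 11 statements merged into one kernel-verified Lean document; each statement's English description precedes it below -/
import Mathlib

section
/- If x is a complex number with |x| = 1, x ≠ 1, and a, b are positive reals, then the complex number x₂ = ((1+a+b)x + ab)/(ab(1 - x)) has |x₂| = 1 if and only if the real part of x equals (ab - (1+a+b))/(2ab). -/
/-!
For `‖x‖ = 1` and real `c, p`, expanding the squared norms gives
`‖c x + p‖² - ‖p (1 - x)‖² = (c + p) (c - p + 2 p Re x)`, so the two norms agree exactly when
`Re x = (p - c) / (2p)`, provided `c + p ≠ 0`. Here `c = 1 + a + b` and `p = ab`, so that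
`c + p = (1 + a)(1 + b) > 0`.
-/

namespace Complex

theorem normSq_eq_one_of_norm_eq_one {x : ℂ} (hx : ‖x‖ = 1) : normSq x = 1 := by
  rw [normSq_eq_norm_sq, hx, one_pow]

theorem normSq_ofReal_mul_add_ofReal (c p : ℝ) (x : ℂ) :
    normSq (c * x + p) = c ^ 2 * normSq x + 2 * c * p * x.re + p ^ 2 := by
  simp only [normSq_apply, add_re, add_im, mul_re, mul_im, ofReal_re, ofReal_im]
  ring

theorem normSq_one_sub_of_norm_eq_one {x : ℂ} (hx : ‖x‖ = 1) :
    normSq (1 - x) = 2 - 2 * x.re := by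
  have h : 1 - x = ((-1 : ℝ) : ℂ) * x + (1 : ℝ) := by push_cast; ring
  rw [h, normSq_ofReal_mul_add_ofReal, normSq_eq_one_of_norm_eq_one hx]
  ring

theorem norm_ofReal_mul_add_ofReal_eq_iff {c p : ℝ} (hcp : c + p ≠ 0) (hp : p ≠ 0) {x : ℂ}
    (hx : ‖x‖ = 1) :
    ‖(c : ℂ) * x + p‖ = ‖(p : ℂ) * (1 - x)‖ ↔ x.re = (p - c) / (2 * p) := by
  have key : normSq (c * x + p) - normSq (p * (1 - x)) = (c + p) * (c - p + 2 * p * x.re) := by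
    rw [normSq_mul, normSq_ofReal, normSq_one_sub_of_norm_eq_one hx,
      normSq_ofReal_mul_add_ofReal, normSq_eq_one_of_norm_eq_one hx]
    ring
  rw [eq_div_iff (mul_ne_zero two_ne_zero hp), ← sq_eq_sq₀ (norm_nonneg _) (norm_nonneg _),
    Complex.sq_norm, Complex.sq_norm, ← sub_eq_zero, key, mul_eq_zero, or_iff_right hcp]
  constructor <;> intro h <;> linarith

end Complex

theorem thomas_phasor_unit_iff (a b : ℝ) (ha : 0 < a) (hb : 0 < b)
    (x : ℂ) (hx : ‖x‖ = 1) (hx1 : x ≠ 1) :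
    ‖((1 + (a:ℂ) + b) * x + a * b) / ((a:ℂ) * b * (1 - x))‖ = 1 ↔
      x.re = (a * b - (1 + a + b)) / (2 * a * b) := by
  have hp : a * b ≠ 0 := (mul_pos ha hb).ne'
  have hcp : 1 + a + b + a * b ≠ 0 := by positivity
  have hD : (a : ℂ) * b * (1 - x) ≠ 0 := by
    refine mul_ne_zero ?_ (sub_ne_zero.mpr hx1.symm)
    exact_mod_cast hp
  rw [norm_div, div_eq_one_iff_eq (norm_ne_zero_iff.mpr hD), mul_assoc 2 a b]
  exact_mod_cast Complex.norm_ofReal_mul_add_ofReal_eq_iff hcp hp hx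
end

section
/- For an integer k ≥ 2, the set of θ in (0, π) satisfying sin(kθ)/sin((k-1)θ) < 0 equals the union over l = 1, ..., k-1 of the open intervals (lπ/k, lπ/(k-1)). -/
/-!
Since `sin (x - l π) = (-1)^l sin x`, shifting both arguments by the same multiple of `π` leaves
`sin a * sin b` unchanged. Hence, when `0 < a - b ≤ π`, the product is negative exactly when some
multiple `l π` lies strictly between `b` and `a`. For `a = k θ`, `b = (k - 1) θ` with `θ ∈ (0, π)`
this says `(k - 1) θ < l π < k θ` for some `l`, and such an `l` lies in `[1, k - 1]`.
-/

open Real Set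

theorem Real.sin_sub_int_mul_pi_mul_sin_sub_int_mul_pi (a b : ℝ) (l : ℤ) :
    sin (a - l * π) * sin (b - l * π) = sin a * sin b := by
  rw [sin_sub_int_mul_pi, sin_sub_int_mul_pi, mul_mul_mul_comm, ← zpow_add₀ (by norm_num),
    ← two_mul, zpow_mul]
  norm_num

theorem Real.sin_mul_sin_neg_iff_exists_int_mul_pi_mem_Ioo {a b : ℝ} (hba : b < a)
    (hab : a ≤ b + π) : sin a * sin b < 0 ↔ ∃ l : ℤ, l * π ∈ Ioo b a := by
  constructor
  · intro hneg
    by_contra! hnone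
    -- otherwise `b` and `a` both lie in `[l π, (l + 1) π]` for `l = ⌊b / π⌋`
    set l := ⌊b / π⌋
    have hlb : l * π ≤ b := (le_div_iff₀ pi_pos).1 (Int.floor_le _)
    have hbl : b < (l + 1) * π := (div_lt_iff₀ pi_pos).1 (Int.lt_floor_add_one _)
    have hal : a ≤ (l + 1) * π := by
      by_contra! hla
      exact hnone (l + 1) (by push_cast; exact ⟨hbl, hla⟩)
    rw [← sin_sub_int_mul_pi_mul_sin_sub_int_mul_pi a b l] at hneg
    have := mul_nonneg (sin_nonneg_of_nonneg_of_le_pi (x := a - l * π) (by linarith) (by linarith))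
      (sin_nonneg_of_nonneg_of_le_pi (x := b - l * π) (by linarith) (by linarith))
    linarith
  · rintro ⟨l, hbl, hla⟩
    rw [← sin_sub_int_mul_pi_mul_sin_sub_int_mul_pi a b l]
    exact mul_neg_of_pos_of_neg (sin_pos_of_pos_of_lt_pi (by linarith) (by linarith))
      (sin_neg_of_neg_of_neg_pi_lt (by linarith) (by linarith))

theorem Set.mem_Ioo_div_div_iff {α : Type*} [Field α] [LinearOrder α] [IsStrictOrderedRing α]
    {c d x y : α} (hc : 0 < c) (hd : 0 < d) :
    x ∈ Ioo (y / d) (y / c) ↔ y ∈ Ioo (c * x) (d * x) := by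
  rw [mem_Ioo, mem_Ioo, div_lt_iff₀ hd, lt_div_iff₀ hc, mul_comm x, mul_comm x, and_comm]

open Real in
theorem sin_ratio_neg_solution_set (k : ℕ) (hk : 2 ≤ k) :
    {θ : ℝ | θ ∈ Set.Ioo 0 π ∧ Real.sin (k * θ) / Real.sin ((k - 1 : ℝ) * θ) < 0} =
      ⋃ l ∈ Finset.Icc 1 (k - 1), Set.Ioo ((l : ℝ) * π / k) ((l : ℝ) * π / (k - 1 : ℝ)) := by
  have hk1 : (0 : ℝ) < k - 1 := by
    have : (2 : ℝ) ≤ k := by exact_mod_cast hk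
    linarith
  ext θ
  simp only [mem_ofPred_eq, mem_iUnion, Finset.mem_Icc, exists_prop,
    mem_Ioo_div_div_iff hk1 (hk1.trans (sub_lt_self _ one_pos)), div_neg_iff, ← mul_neg_iff]
  constructor
  · rintro ⟨⟨hθ0, hθπ⟩, hneg⟩
    obtain ⟨l, hl⟩ := (sin_mul_sin_neg_iff_exists_int_mul_pi_mem_Ioo (by linarith)
      (by linarith)).1 hneg
    have hl0 : (0 : ℝ) < l := pos_of_mul_pos_left (hl.1.trans' (by positivity)) pi_pos.le
    have hlk : (l : ℝ) < k := lt_of_mul_lt_mul_right (hl.2.trans (by gcongr)) pi_pos.le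
    lift l to ℕ using (Int.cast_pos.1 hl0).le
    exact ⟨l, ⟨by exact_mod_cast hl0, Nat.le_sub_one_of_lt (by exact_mod_cast hlk)⟩,
      by exact_mod_cast hl⟩
  · rintro ⟨l, ⟨hl1, hlk⟩, hbl, hla⟩
    have hlk' : (l : ℝ) + 1 ≤ k := by exact_mod_cast (by omega : l + 1 ≤ k)
    have hθ0 : 0 < θ := by nlinarith [pi_pos, (Nat.one_le_cast (α := ℝ)).2 hl1]
    have hθπ : θ < π := by nlinarith [pi_pos]
    exact ⟨⟨hθ0, hθπ⟩, (sin_mul_sin_neg_iff_exists_int_mul_pi_mem_Ioo (by linarith)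
      (by linarith)).2 ⟨l, by exact_mod_cast hbl, by exact_mod_cast hla⟩⟩
end

section
/- For an integer k ≥ 1, the set of θ in (0, π) satisfying cos((k+1/2)θ)/cos((k-1/2)θ) < 0 equals the union over l = 1, ..., k of the open intervals ((2l-1)π/(2k+1), (2l-1)π/(2k-1)). -/
open Real

lemma cos_lt_cos_iff_aux {x v : ℝ} (hv0 : 0 < v) (hvpi : v < π) :
    Real.cos x < Real.cos v ↔ ∃ n : ℤ, 2*n*π + v < x ∧ x < 2*n*π + 2*π - v := by
  have hpi := Real.pi_pos
  constructor
  · intro h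
    set n : ℤ := ⌊(x + π) / (2*π)⌋ with hn
    have h2π : (0:ℝ) < 2*π := by linarith
    have hfl : (n:ℝ) ≤ (x + π) / (2*π) := Int.floor_le _
    have hfu : (x + π) / (2*π) < n + 1 := Int.lt_floor_add_one _
    have hy1 : -π ≤ x - 2*π*n := by
      have h := mul_le_mul_of_nonneg_right hfl (le_of_lt h2π)
      rw [div_mul_cancel₀ _ (ne_of_gt h2π)] at h
      linarith
    have hy2 : x - 2*π*n < π := by
      have := mul_lt_mul_of_pos_right hfu h2π
      rw [div_mul_cancel₀ _ (ne_of_gt h2π)] at this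
      linarith
    set y := x - 2*π*n with hy
    have hcos : Real.cos x = Real.cos y := by
      rw [show x = y + n * (2*π) by rw [hy]; ring, Real.cos_add_int_mul_two_pi]
    rw [hcos] at h
    rcases le_or_gt 0 y with h0 | h0
    · have hvy : v < y := by
        by_contra hcon
        push_neg at hcon
        exact absurd (Real.cos_le_cos_of_nonneg_of_le_pi h0 (le_of_lt hvpi) hcon) (not_le.mpr h)
      exact ⟨n, by constructor <;> [simp only [hy] at hvy ⊢; skip] <;> linarith⟩
    · have hvy : v < -y := by
        by_contra hcon
        push_neg at hcon
        have : Real.cos v ≤ Real.cos (-y) :=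
          Real.cos_le_cos_of_nonneg_of_le_pi (by linarith) (le_of_lt hvpi) hcon
        rw [Real.cos_neg] at this
        exact absurd this (not_le.mpr h)
      refine ⟨n - 1, ?_, ?_⟩ <;> push_cast <;> simp only [hy] at hvy hy1 ⊢ <;> linarith
  · rintro ⟨n, h1, h2⟩
    set y := x - 2*π*n with hy
    have hcos : Real.cos x = Real.cos y := by
      rw [show x = y + n * (2*π) by rw [hy]; ring, Real.cos_add_int_mul_two_pi]
    rw [hcos]
    have hy1 : v < y := by simp only [hy]; linarith
    have hy2 : y < 2*π - v := by simp only [hy]; linarith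
    rcases le_or_gt y π with hc | hc
    · exact Real.cos_lt_cos_of_nonneg_of_le_pi (le_of_lt hv0) hc hy1
    · have : Real.cos y = Real.cos (2*π - y) := by
        rw [show (2*π - y) = -y + 1 * (2*π) by ring]
        rw [show ((1:ℝ)) = ((1:ℤ):ℝ) by norm_num, Real.cos_add_int_mul_two_pi, Real.cos_neg]
      rw [this]
      exact Real.cos_lt_cos_of_nonneg_of_le_pi (le_of_lt hv0) (by linarith) (by linarith)

open Real in
theorem cos_ratio_neg_solution_set (k : ℕ) (hk : 1 ≤ k) :
    {θ : ℝ | θ ∈ Set.Ioo 0 π ∧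
        Real.cos ((k + 1/2 : ℝ) * θ) / Real.cos ((k - 1/2 : ℝ) * θ) < 0} =
      ⋃ l ∈ Finset.Icc 1 k,
        Set.Ioo ((2 * (l : ℝ) - 1) * π / (2 * k + 1)) ((2 * (l : ℝ) - 1) * π / (2 * k - 1)) := by
  have hpi := Real.pi_pos
  have hk1 : (1:ℝ) ≤ (k:ℝ) := by exact_mod_cast hk
  have hkp : (0:ℝ) < 2*(k:ℝ) + 1 := by linarith
  have hkm : (0:ℝ) < 2*(k:ℝ) - 1 := by linarith
  ext θ
  simp only [Set.mem_setOf_eq, Set.mem_Ioo, Set.mem_iUnion, Finset.mem_Icc, exists_prop]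
  constructor
  · rintro ⟨⟨hθ0, hθπ⟩, hratio⟩
    -- ratio < 0 ↔ product < 0
    have hmul : Real.cos ((k + 1/2 : ℝ) * θ) * Real.cos ((k - 1/2 : ℝ) * θ) < 0 := by
      rw [div_neg_iff] at hratio
      rw [mul_neg_iff]
      tauto
    have hprod : Real.cos (2*k*θ) + Real.cos θ =
        2 * Real.cos ((k + 1/2 : ℝ) * θ) * Real.cos ((k - 1/2 : ℝ) * θ) := by
      rw [Real.cos_add_cos]
      congr 1
      · congr 1; ring
      · ring
    have hsum : Real.cos (2*k*θ) < Real.cos (π - θ) := by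
      rw [Real.cos_pi_sub]
      nlinarith
    have hv0 : 0 < π - θ := by linarith
    have hvpi : π - θ < π := by linarith
    obtain ⟨n, h1, h2⟩ := (cos_lt_cos_iff_aux hv0 hvpi).mp hsum
    -- (2n+1)π < (2k+1)θ and (2k-1)θ < (2n+1)π
    have hA : (2*(n:ℝ)+1)*π < (2*k+1)*θ := by linarith
    have hB : (2*k-1)*θ < (2*(n:ℝ)+1)*π := by linarith
    have hn0 : 0 ≤ n := by
      by_contra hcon
      push_neg at hcon
      have : (n:ℝ) ≤ -1 := by exact_mod_cast Int.le_sub_one_of_lt hcon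
      nlinarith
    have hnk : (n:ℝ) + 1 ≤ (k:ℝ) := by
      have : (2*(n:ℝ)+1)*π < (2*k+1)*π := by nlinarith
      have h2 : (2*(n:ℝ)+1) < 2*(k:ℝ)+1 := by
        by_contra hcon; push_neg at hcon; nlinarith
      have : (n:ℝ) < (k:ℝ) := by linarith
      have : n < (k:ℤ) := by exact_mod_cast this
      have : (n:ℝ) + 1 ≤ ((k:ℤ):ℝ) := by exact_mod_cast this
      exact_mod_cast this
    have hcast : ((n.toNat : ℝ)) = (n:ℝ) := by
      have := Int.toNat_of_nonneg hn0
      exact_mod_cast congrArg (fun z : ℤ => (z : ℝ)) this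
    refine ⟨n.toNat + 1, ⟨le_add_self, ?_⟩, ?_, ?_⟩
    · have hz : n + 1 ≤ (k:ℤ) := by exact_mod_cast hnk
      omega
    · rw [div_lt_iff₀ hkp]
      push_cast
      rw [hcast]
      linarith
    · rw [lt_div_iff₀ hkm]
      push_cast
      rw [hcast]
      linarith
  · rintro ⟨l, ⟨hl1, hlk⟩, ha, hb⟩
    have hl1' : (1:ℝ) ≤ (l:ℝ) := by exact_mod_cast hl1
    have hlk' : (l:ℝ) ≤ (k:ℝ) := by exact_mod_cast hlk
    have hθ0 : 0 < θ := by
      have : 0 < (2*(l:ℝ)-1)*π/(2*k+1) := div_pos (by nlinarith) hkp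
      linarith
    have hθπ : θ < π := by
      have : (2*(l:ℝ)-1)*π/(2*k-1) ≤ π := by
        rw [div_le_iff₀ hkm]; nlinarith
      linarith
    have ha' : (2*(l:ℝ)-1)*π < (2*k+1)*θ := by rw [div_lt_iff₀ hkp] at ha; linarith
    have hb' : (2*k-1)*θ < (2*(l:ℝ)-1)*π := by rw [lt_div_iff₀ hkm] at hb; linarith
    refine ⟨⟨hθ0, hθπ⟩, ?_⟩
    have hv0 : 0 < π - θ := by linarith
    have hvpi : π - θ < π := by linarith
    have hsum : Real.cos (2*k*θ) < Real.cos (π - θ) := by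
      refine (cos_lt_cos_iff_aux hv0 hvpi).mpr ⟨(l:ℤ) - 1, ?_, ?_⟩ <;> push_cast <;> linarith
    rw [Real.cos_pi_sub] at hsum
    have hprod : Real.cos (2*k*θ) + Real.cos θ =
        2 * Real.cos ((k + 1/2 : ℝ) * θ) * Real.cos ((k - 1/2 : ℝ) * θ) := by
      rw [Real.cos_add_cos]
      congr 1
      · congr 1; ring
      · ring
    have hmul : Real.cos ((k + 1/2 : ℝ) * θ) * Real.cos ((k - 1/2 : ℝ) * θ) < 0 := by nlinarith
    rw [div_neg_iff]
    rw [mul_neg_iff] at hmul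
    tauto
end

section
/- For an integer n ≥ 2, the intersection over k = 1, ..., n-1 of the sets {θ ∈ (0,π) : sin(kθ)·sin((k-1)θ) ≤ 0, sin(kθ)/sin((k-1)θ) < 0} (interpreted as ∪_{l=1}^{k-1}(lπ/k, lπ/(k-1)) for each k ≥ 2, with the k = 1 set being all of (0,π)) equals the interval ((n-2)π/(n-1), π). -/
open Real

lemma key (n : ℕ) (hn : 2 ≤ n) :
    ((⋃ l ∈ Finset.Icc 1 (n - 1),
        Set.Ioo ((l : ℝ) * π / n) ((l : ℝ) * π / ((n : ℝ) - 1))) ∩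
      Set.Ioo (((n : ℝ) - 2) * π / ((n : ℝ) - 1)) π) =
      Set.Ioo (((n : ℝ) - 1) * π / n) π := by
  have hn2 : (2:ℝ) ≤ (n:ℝ) := by exact_mod_cast hn
  have hpi := pi_pos
  ext θ
  simp only [Set.mem_inter_iff, Set.mem_iUnion, Set.mem_Ioo, Finset.mem_Icc]
  constructor
  · rintro ⟨⟨l, ⟨hl1, hl2⟩, hθ1, hθ2⟩, hθ3, hθ4⟩
    refine ⟨?_, hθ4⟩
    rcases eq_or_lt_of_le hl2 with h | h
    · have : (l:ℝ) = (n:ℝ) - 1 := by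
        have : (l:ℕ) = n - 1 := h
        subst this
        push_cast [Nat.cast_sub (by omega : 1 ≤ n)]
        ring
      rw [this] at hθ1
      linarith
    · exfalso
      have : (l:ℝ) ≤ (n:ℝ) - 2 := by
        have : l ≤ n - 2 := by omega
        have := (Nat.cast_le (α := ℝ)).2 this
        push_cast [Nat.cast_sub (by omega : 2 ≤ n)] at this
        linarith
      have hlt : (l:ℝ) * π / ((n:ℝ) - 1) ≤ ((n:ℝ) - 2) * π / ((n:ℝ) - 1) := by
        apply div_le_div_of_nonneg_right ?_ (by linarith) |>.trans_eq rfl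
        nlinarith
      linarith
  · rintro ⟨h1, h2⟩
    have hcast : ((n - 1 : ℕ) : ℝ) = (n:ℝ) - 1 := by
      push_cast [Nat.cast_sub (by omega : 1 ≤ n)]; ring
    refine ⟨⟨n - 1, ⟨by omega, le_refl _⟩, ?_, ?_⟩, ?_, h2⟩
    · rw [hcast]; exact h1
    · rw [hcast, mul_comm, mul_div_assoc, div_self (by linarith), mul_one]
      exact h2
    · have : ((n:ℝ) - 2) * π / ((n:ℝ) - 1) ≤ ((n:ℝ) - 1) * π / n := by
        rw [div_le_div_iff₀ (by linarith) (by linarith)]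
        nlinarith
      linarith

open Real in
theorem sin_sets_intersection (n : ℕ) (hn : 2 ≤ n) :
    (⋂ k ∈ Finset.Icc 1 (n - 1),
        (if k = 1 then Set.Ioo (0 : ℝ) π
         else ⋃ l ∈ Finset.Icc 1 (k - 1),
           Set.Ioo ((l : ℝ) * π / k) ((l : ℝ) * π / (k - 1 : ℝ)))) =
      Set.Ioo (((n : ℝ) - 2) * π / ((n : ℝ) - 1)) π := by
  induction n, hn using Nat.le_induction with
  | base => norm_num
  | succ n hn IH =>
    have h1 : n + 1 - 1 = n := rfl
    have h2 : Finset.Icc 1 n = insert n (Finset.Icc 1 (n-1)) := by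
      ext x; simp only [Finset.mem_Icc, Finset.mem_insert]; omega
    rw [h1, h2, Finset.set_biInter_insert, IH, if_neg (by omega)]
    rw [key n hn]
    push_cast
    ring_nf
end

section
/- For an integer n ≥ 2, the intersection of the interval ((n-2)π/(n-1), π) with the sets ∪_{l=1}^{k}((2l-1)π/(2k+1), (2l-1)π/(2k-1)) for k = 1, ..., n-1 equals the interval ((2n-3)π/(2n-1), π). -/
open Real in
theorem cos_sets_intersection (n : ℕ) (hn : 2 ≤ n) :
    (Set.Ioo (((n : ℝ) - 2) * π / ((n : ℝ) - 1)) π ∩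
      ⋂ k ∈ Finset.Icc 1 (n - 1),
        ⋃ l ∈ Finset.Icc 1 k,
          Set.Ioo ((2 * (l : ℝ) - 1) * π / (2 * k + 1)) ((2 * (l : ℝ) - 1) * π / (2 * k - 1))) =
      Set.Ioo ((2 * (n : ℝ) - 3) * π / (2 * (n : ℝ) - 1)) π := by
  have hπ := Real.pi_pos
  have hnR : (2:ℝ) ≤ (n:ℝ) := by exact_mod_cast hn
  have hcast : ((n - 1 : ℕ) : ℝ) = (n:ℝ) - 1 := by
    have : 1 ≤ n := by omega
    push_cast [this]; ring
  ext x
  simp only [Set.mem_inter_iff, Set.mem_iInter, Set.mem_iUnion, Set.mem_Ioo,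
    Finset.mem_Icc, exists_prop]
  constructor
  · rintro ⟨⟨hx1, hx2⟩, h⟩
    refine ⟨?_, hx2⟩
    obtain ⟨l, ⟨hl1, hl2⟩, hlo, hhi⟩ := h (n - 1) ⟨by omega, le_refl _⟩
    rw [hcast] at hlo hhi
    by_cases hle : l = n - 1
    · subst hle
      rw [hcast] at hlo
      have heq : (2 * (n:ℝ) - 3) * π / (2 * (n:ℝ) - 1)
          = (2 * ((n:ℝ) - 1) - 1) * π / (2 * ((n:ℝ) - 1) + 1) := by ring_nf
      rw [heq]; exact hlo
    · exfalso
      have hlR : (l:ℝ) ≤ (n:ℝ) - 2 := by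
        have h2 : l ≤ n - 2 := by omega
        have : (l:ℝ) ≤ ((n - 2 : ℕ) : ℝ) := by exact_mod_cast h2
        have h2n : ((n - 2 : ℕ) : ℝ) = (n:ℝ) - 2 := by
          push_cast [hn]; ring
        linarith [h2n ▸ this]
      have hd1 : (0:ℝ) < (n:ℝ) - 1 := by linarith
      have hd2 : (0:ℝ) < 2 * ((n:ℝ) - 1) - 1 := by linarith
      have key : ((n:ℝ) - 2) * π / ((n:ℝ) - 1) < (2 * (l:ℝ) - 1) * π / (2 * ((n:ℝ) - 1) - 1) :=
        lt_trans hx1 hhi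
      rw [div_lt_div_iff₀ hd1 hd2] at key
      nlinarith [mul_nonneg (mul_nonneg (by linarith : (0:ℝ) ≤ (n:ℝ) - 2 - l)
        (by linarith : (0:ℝ) ≤ (n:ℝ) - 1)) hπ.le]
  · rintro ⟨hx1, hx2⟩
    refine ⟨⟨?_, hx2⟩, ?_⟩
    · have hd1 : (0:ℝ) < (n:ℝ) - 1 := by linarith
      have hd2 : (0:ℝ) < 2 * (n:ℝ) - 1 := by linarith
      have : ((n:ℝ) - 2) * π / ((n:ℝ) - 1) ≤ (2 * (n:ℝ) - 3) * π / (2 * (n:ℝ) - 1) := by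
        rw [div_le_div_iff₀ hd1 hd2]
        nlinarith
      linarith
    · intro k hk
      obtain ⟨hk1, hk2⟩ := hk
      have hkR : (1:ℝ) ≤ (k:ℝ) := by exact_mod_cast hk1
      have hkn : (k:ℝ) ≤ (n:ℝ) - 1 := by
        have : (k:ℝ) ≤ ((n - 1 : ℕ) : ℝ) := by exact_mod_cast hk2
        linarith [hcast ▸ this]
      refine ⟨k, ⟨hk1, le_refl _⟩, ?_, ?_⟩
      · have hd1 : (0:ℝ) < 2 * (k:ℝ) + 1 := by linarith
        have hd2 : (0:ℝ) < 2 * (n:ℝ) - 1 := by linarith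
        have : (2 * (k:ℝ) - 1) * π / (2 * (k:ℝ) + 1) ≤ (2 * (n:ℝ) - 3) * π / (2 * (n:ℝ) - 1) := by
          rw [div_le_div_iff₀ hd1 hd2]
          nlinarith
        linarith
      · have hne : 2 * (k:ℝ) - 1 ≠ 0 := by linarith
        have heq : (2 * (k:ℝ) - 1) * π / (2 * (k:ℝ) - 1) = π := by
          field_simp
        rw [heq]; exact hx2
end

section
/- Let a, b > 0, n ≥ 1 an integer, and θ real with sin(nθ) ≠ 0. If sin²(θ/2) = b/((a+b)(a+1)) and cos²(θ/2)/sin²(nθ) = a(1+b)/(a+b), then tan²(nθ) = (1+a+b)/(ab) and tan²(θ/2) = b/(a(1+a+b)). -/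
/-! Both conditions pin down squared sines: `sin²(θ/2)` directly, and `sin²(nθ)` through
`cos²(θ/2) = 1 - sin²(θ/2)`. Each has the shape `p / (p + q)`, and then `tan² = p / q`. -/

namespace Real

theorem tan_sq_eq_div_of_sin_sq_eq {x p q : ℝ} (hpq : p + q ≠ 0)
    (h : sin x ^ 2 = p / (p + q)) : tan x ^ 2 = p / q := by
  rw [tan_eq_sin_div_cos, div_pow, cos_sq', h, one_sub_div hpq, add_sub_cancel_left,
    div_div_div_cancel_right₀ hpq]

end Real

open Real

theorem boundary_conditions_combined_general (a b : ℝ) (ha : 0 < a) (hb : 0 < b)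
    (n : ℕ) (θ : ℝ) (hsin : Real.sin (n * θ) ≠ 0)
    (h1 : Real.sin (θ/2)^2 = b / ((a + b) * (a + 1)))
    (h2 : Real.cos (θ/2)^2 / Real.sin (n * θ)^2 = a * (1 + b) / (a + b)) :
    Real.tan (n * θ)^2 = (1 + a + b) / (a * b) ∧
      Real.tan (θ/2)^2 = b / (a * (1 + a + b)) := by
  have hsin_half : sin (θ/2)^2 = b / (b + a * (1 + a + b)) := by
    rw [h1]
    ring_nf
  have hcos_half : cos (θ/2)^2 = a * (1 + a + b) / (b + a * (1 + a + b)) := by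
    rw [cos_sq', hsin_half, one_sub_div (by positivity), add_sub_cancel_left]
  have hsin_n : sin (n * θ)^2 = (1 + a + b) / ((1 + a + b) + a * b) := by
    rw [div_eq_iff (pow_ne_zero 2 hsin)] at h2
    have hsin_n_cos : sin (n * θ)^2 = cos (θ/2)^2 * (a + b) / (a * (1 + b)) := by
      rw [h2]
      field_simp
    rw [hsin_n_cos, hcos_half]
    field_simp
    ring
  exact ⟨tan_sq_eq_div_of_sin_sq_eq (by positivity) hsin_n,
    tan_sq_eq_div_of_sin_sq_eq (by positivity) hsin_half⟩

theorem boundary_conditions_combined (a b : ℝ) (ha : 0 < a) (hb : 0 < b)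
    (n : ℕ) (hn : 1 ≤ n) (θ : ℝ) (hsin : Real.sin (n * θ) ≠ 0)
    (h1 : Real.sin (θ/2)^2 = b / ((a + b) * (a + 1)))
    (h2 : Real.cos (θ/2)^2 / Real.sin (n * θ)^2 = a * (1 + b) / (a + b)) :
    Real.tan (n * θ)^2 = (1 + a + b) / (a * b) ∧
      Real.tan (θ/2)^2 = b / (a * (1 + a + b)) :=
  boundary_conditions_combined_general a b ha hb n θ hsin h1 h2
end

section
/- For an integer n ≥ 1 and θ strictly between (2n-2)π/(2n-1) and (2n-1)π/(2n), the numbers a = cot(θ/2)·cot(nθ) and b = cot(nθ)·cot((n-1/2)θ) are both positive, and they satisfy tan²(nθ) = (1+a+b)/(ab) and tan²(θ/2) = b/(a(1+a+b)). -/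
open Real

lemma aux_interval (k : ℤ) (x : ℝ) (h1 : (k : ℝ) * π < x) (h2 : x < (k : ℝ) * π + π / 2) :
    0 < Real.tan x ∧ Real.sin x ≠ 0 ∧ Real.cot x = 1 / Real.tan x := by
  have hy1 : 0 < x - k * π := by linarith
  have hy2 : x - k * π < π / 2 := by linarith
  have hπ := Real.pi_pos
  have hsy : 0 < Real.sin (x - k * π) :=
    Real.sin_pos_of_pos_of_lt_pi hy1 (by linarith)
  have hcy : 0 < Real.cos (x - k * π) :=
    Real.cos_pos_of_mem_Ioo ⟨by linarith, hy2⟩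
  have htp : 0 < Real.tan x := by
    have := Real.tan_pos_of_pos_of_lt_pi_div_two hy1 hy2
    rwa [Real.tan_sub_int_mul_pi] at this
  have hs : Real.sin (x - k * π) = (-1) ^ k * Real.sin x := Real.sin_sub_int_mul_pi x k
  have hc : Real.cos (x - k * π) = (-1) ^ k * Real.cos x := Real.cos_sub_int_mul_pi x k
  have hpow : ((-1 : ℝ)) ^ k ≠ 0 := by
    simp [zpow_ne_zero]
  have hsin : Real.sin x ≠ 0 := by
    intro h; rw [h, mul_zero] at hs; exact hsy.ne' (hs ▸ rfl)
  have hcos : Real.cos x ≠ 0 := by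
    intro h; rw [h, mul_zero] at hc; exact hcy.ne' (hc ▸ rfl)
  refine ⟨htp, hsin, ?_⟩
  rw [Real.cot_eq_cos_div_sin, Real.tan_eq_sin_div_cos, one_div_div]

lemma cot_add_identity (t s : ℝ) (ht : Real.sin t ≠ 0) (hs : Real.sin s ≠ 0)
    (hts : Real.sin (t + s) ≠ 0) :
    1 + Real.cot t * Real.cot (t + s) + Real.cot (t + s) * Real.cot s
      = Real.cot t * Real.cot s := by
  rw [Real.sin_add] at hts
  rw [Real.cot_eq_cos_div_sin, Real.cot_eq_cos_div_sin, Real.cot_eq_cos_div_sin,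
    Real.sin_add, Real.cos_add]
  field_simp
  ring

lemma alg_aux (A B C : ℝ) (hA : 0 < A) (hB : 0 < B) (hC : 0 < C)
    (key : 1 + A * B + B * C = A * C) :
    (1 / B) ^ 2 = (1 + A * B + B * C) / (A * B * (B * C)) ∧
    (1 / A) ^ 2 = B * C / (A * B * (1 + A * B + B * C)) := by
  rw [key]
  constructor
  · rw [div_pow, one_pow,
      div_eq_div_iff (by positivity) (by positivity)]
    ring
  · rw [div_pow, one_pow,
      div_eq_div_iff (by positivity) (by positivity)]
    ring

open Real in
theorem boundary_curve_C_odd (n : ℕ) (hn : 1 ≤ n) (θ : ℝ)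
    (hθ : θ ∈ Set.Ioo ((2 * (n : ℝ) - 2) * π / (2 * (n : ℝ) - 1))
      ((2 * (n : ℝ) - 1) * π / (2 * (n : ℝ)))) :
    0 < Real.cot (θ/2) * Real.cot (n * θ) ∧
    0 < Real.cot (n * θ) * Real.cot (((n : ℝ) - 1/2) * θ) ∧
    Real.tan (n * θ)^2 =
      (1 + Real.cot (θ/2) * Real.cot (n * θ) + Real.cot (n * θ) * Real.cot (((n : ℝ) - 1/2) * θ)) /
        (Real.cot (θ/2) * Real.cot (n * θ) * (Real.cot (n * θ) * Real.cot (((n : ℝ) - 1/2) * θ))) ∧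
    Real.tan (θ/2)^2 =
      Real.cot (n * θ) * Real.cot (((n : ℝ) - 1/2) * θ) /
        (Real.cot (θ/2) * Real.cot (n * θ) *
          (1 + Real.cot (θ/2) * Real.cot (n * θ) + Real.cot (n * θ) * Real.cot (((n : ℝ) - 1/2) * θ))) := by
  obtain ⟨hl, hr⟩ := hθ
  set N : ℝ := (n : ℝ) with hNdef
  have hN : (1 : ℝ) ≤ N := by rw [hNdef]; exact_mod_cast hn
  have hπ := Real.pi_pos
  have hd1 : (0:ℝ) < 2 * N - 1 := by linarith
  have hd2 : (0:ℝ) < 2 * N := by linarith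
  have hl' : (2 * N - 2) * π < θ * (2 * N - 1) := (div_lt_iff₀ hd1).mp hl
  have hr' : θ * (2 * N) < (2 * N - 1) * π := (lt_div_iff₀ hd2).mp hr
  have hθpos : 0 < θ := by nlinarith
  have hθpi : θ < π := by nlinarith
  -- t = θ/2
  have ht := aux_interval 0 (θ/2) (by push_cast; linarith) (by push_cast; linarith)
  -- m = N*θ
  have hmlo : (N - 1) * π < N * θ := by nlinarith
  have hmhi : N * θ < (N - 1) * π + π / 2 := by nlinarith
  have hm := aux_interval ((n : ℤ) - 1) (N * θ) (by push_cast; linarith) (by push_cast; linarith)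
  -- s = (N - 1/2)*θ
  have hslo : (N - 1) * π < (N - 1/2) * θ := by nlinarith
  have hshi : (N - 1/2) * θ < (N - 1) * π + π / 2 := by nlinarith
  have hs := aux_interval ((n : ℤ) - 1) ((N - 1/2) * θ) (by push_cast; linarith) (by push_cast; linarith)
  obtain ⟨htanT, hsinT, hcotT⟩ := ht
  obtain ⟨htanM, hsinM, hcotM⟩ := hm
  obtain ⟨htanS, hsinS, hcotS⟩ := hs
  have hA : 0 < Real.cot (θ/2) := by rw [hcotT]; positivity
  have hB : 0 < Real.cot (N * θ) := by rw [hcotM]; positivity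
  have hC : 0 < Real.cot ((N - 1/2) * θ) := by rw [hcotS]; positivity
  have hsum : θ/2 + (N - 1/2) * θ = N * θ := by ring
  have key : 1 + Real.cot (θ/2) * Real.cot (N * θ)
      + Real.cot (N * θ) * Real.cot ((N - 1/2) * θ)
      = Real.cot (θ/2) * Real.cot ((N - 1/2) * θ) := by
    have := cot_add_identity (θ/2) ((N - 1/2) * θ) hsinT hsinS (by rw [hsum]; exact hsinM)
    rwa [hsum] at this
  have htM : Real.tan (N * θ) = 1 / Real.cot (N * θ) := by
    rw [hcotM, one_div_one_div]
  have htT : Real.tan (θ/2) = 1 / Real.cot (θ/2) := by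
    rw [hcotT, one_div_one_div]
  refine ⟨mul_pos hA hB, mul_pos hB hC, ?_, ?_⟩
  · rw [htM]
    exact (alg_aux _ _ _ hA hB hC key).1
  · rw [htT]
    exact (alg_aux _ _ _ hA hB hC key).2
end

section
/- For an integer n ≥ 1 and θ strictly between (2n-1)π/(2n) and 2nπ/(2n+1), the numbers a = −cot(θ/2)·cot(nθ) and b = cot(nθ)·cot((n+1/2)θ) are both positive. -/
open Real in
lemma cot_neg_aux (k : ℕ) (x : ℝ) (h1 : k * π - π / 2 < x) (h2 : x < k * π) :
    Real.cot x < 0 := by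
  have hs2 : Real.sin (2 * x) < 0 := by
    have hper := (Real.sin_periodic.nat_mul k) (2 * x - k * (2 * π))
    have heq : 2 * x - k * (2 * π) + k * (2 * π) = 2 * x := by ring
    rw [heq] at hper
    rw [hper]
    apply Real.sin_neg_of_neg_of_neg_pi_lt <;> nlinarith [Real.pi_pos]
  rw [Real.sin_two_mul] at hs2
  rw [Real.cot_eq_cos_div_sin]
  rcases mul_neg_iff.mp (by nlinarith : Real.cos x * Real.sin x < 0) with ⟨h, h'⟩ | ⟨h, h'⟩
  · exact div_neg_of_pos_of_neg h h'
  · exact div_neg_of_neg_of_pos h h'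

open Real in
theorem boundary_curve_C_even (n : ℕ) (hn : 1 ≤ n) (θ : ℝ)
    (hθ : θ ∈ Set.Ioo ((2 * (n : ℝ) - 1) * π / (2 * (n : ℝ)))
      (2 * (n : ℝ) * π / (2 * (n : ℝ) + 1))) :
    0 < -Real.cot (θ/2) * Real.cot (n * θ) ∧
    0 < Real.cot (n * θ) * Real.cot (((n : ℝ) + 1/2) * θ) := by
  obtain ⟨h1, h2⟩ := hθ
  have hn' : (1 : ℝ) ≤ n := by exact_mod_cast hn
  have hπ := Real.pi_pos
  have hθpos : 0 < θ := by
    have : 0 < (2 * (n : ℝ) - 1) * π / (2 * (n : ℝ)) :=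
      div_pos (by nlinarith) (by nlinarith)
    linarith
  have hθlt : θ < π := by
    rw [lt_div_iff₀ (by nlinarith)] at h2
    nlinarith
  have hcothalf : 0 < Real.cot (θ / 2) := by
    rw [Real.cot_eq_cos_div_sin]
    apply div_pos
    · exact Real.cos_pos_of_mem_Ioo ⟨by linarith, by linarith⟩
    · exact Real.sin_pos_of_pos_of_lt_pi (by linarith) (by linarith)
  have h1' : (2 * (n : ℝ) - 1) * π / (2 * (n : ℝ)) * (2 * (n : ℝ)) < θ * (2 * (n : ℝ)) := by
    apply mul_lt_mul_of_pos_right h1; nlinarith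
  rw [div_mul_cancel₀ _ (by nlinarith : (2 * (n : ℝ)) ≠ 0)] at h1'
  have h2' : θ * (2 * (n : ℝ) + 1) < 2 * (n : ℝ) * π / (2 * (n : ℝ) + 1) * (2 * (n : ℝ) + 1) := by
    apply mul_lt_mul_of_pos_right h2; nlinarith
  rw [div_mul_cancel₀ _ (by nlinarith : (2 * (n : ℝ) + 1) ≠ 0)] at h2'
  have hcotn : Real.cot ((n : ℝ) * θ) < 0 := by
    apply cot_neg_aux n <;> nlinarith
  have hcotn2 : Real.cot (((n : ℝ) + 1/2) * θ) < 0 := by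
    apply cot_neg_aux n <;> nlinarith
  constructor
  · nlinarith
  · nlinarith
end

section
/- The function Q(θ) = cos²((n+1/2)θ)/cos²(θ/2) is strictly monotonically increasing on the interval ((2n-1)π/(2n+1), π) for each integer n ≥ 1, increasing from 0 at the left endpoint to (2n+1)² at θ = π. -/
open Real Finset

noncomputable def Sdir (n : ℕ) (φ : ℝ) : ℝ :=
  1 + 2 * ∑ k ∈ Finset.range n, Real.cos (((k : ℝ) + 1) * φ)

lemma sin_Sdir (n : ℕ) (φ : ℝ) :
    Real.sin (((n : ℝ) + 1/2) * φ) = Real.sin (φ/2) * Sdir n φ := by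
  induction n with
  | zero => simp [Sdir]; ring_nf
  | succ m ih =>
    have h1 := Real.sin_add (((m:ℝ)+1)*φ) (φ/2)
    have h2 := Real.sin_sub (((m:ℝ)+1)*φ) (φ/2)
    have e1 : ((m:ℝ)+1)*φ + φ/2 = (((m:ℕ):ℝ)+1+1/2)*φ := by ring
    have e2 : ((m:ℝ)+1)*φ - φ/2 = (((m:ℕ):ℝ)+1/2)*φ := by ring
    rw [e1] at h1; rw [e2] at h2
    have hc : ((m+1 : ℕ) : ℝ) = (m:ℝ)+1 := by push_cast; ring
    rw [hc]
    have hS : Sdir (m+1) φ = Sdir m φ + 2 * Real.cos (((m:ℝ)+1)*φ) := by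
      simp [Sdir, Finset.sum_range_succ]; ring
    rw [hS]
    nlinarith [h1, h2, ih]

lemma Sdir_pos (n : ℕ) (φ : ℝ) (h0 : 0 < φ) (h1 : φ < 2 * π / (2 * (n:ℝ) + 1)) :
    0 < Sdir n φ := by
  have hd : (0:ℝ) < 2 * (n:ℝ) + 1 := by positivity
  have hs2 : 0 < Real.sin (φ/2) := by
    apply Real.sin_pos_of_pos_of_lt_pi (by linarith)
    have : φ < 2 * π := lt_of_lt_of_le h1 (by
      rw [div_le_iff₀ hd]
      nlinarith [Real.pi_pos, (by exact_mod_cast Nat.zero_le n : (0:ℝ) ≤ n)])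
    linarith
  have hsn : 0 < Real.sin (((n:ℝ) + 1/2) * φ) := by
    apply Real.sin_pos_of_pos_of_lt_pi (by positivity)
    have h1' : φ * (2 * (n:ℝ) + 1) < 2 * π := (lt_div_iff₀ hd).mp h1
    nlinarith
  rw [sin_Sdir] at hsn
  nlinarith [hsn, hs2]

lemma Sdir_anti (n : ℕ) (hn : 1 ≤ n) {φ₁ φ₂ : ℝ} (h0 : 0 < φ₂) (h12 : φ₂ < φ₁)
    (h1 : φ₁ < 2 * π / (2 * (n:ℝ) + 1)) : Sdir n φ₁ < Sdir n φ₂ := by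
  have hd : (0:ℝ) < 2 * (n:ℝ) + 1 := by positivity
  unfold Sdir
  have key : ∑ k ∈ Finset.range n, Real.cos (((k : ℝ) + 1) * φ₁)
      < ∑ k ∈ Finset.range n, Real.cos (((k : ℝ) + 1) * φ₂) := by
    apply Finset.sum_lt_sum_of_nonempty
    · exact Finset.nonempty_range_iff.mpr (by omega)
    · intro k hk
      have hkn : (k:ℝ) + 1 ≤ (n:ℝ) := by
        have := Finset.mem_range.mp hk
        exact_mod_cast Nat.succ_le_of_lt this
      have hkpos : (0:ℝ) < (k:ℝ) + 1 := by positivity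
      apply Real.cos_lt_cos_of_nonneg_of_le_pi
      · positivity
      · have h1' : φ₁ * (2 * (n:ℝ) + 1) < 2 * π := (lt_div_iff₀ hd).mp h1
        nlinarith [Real.pi_pos, h0.trans h12]
      · exact (mul_lt_mul_iff_right₀ hkpos).mpr h12
  linarith

lemma Q_eq (n : ℕ) {θ : ℝ} (h0 : 0 < θ) (hπ : θ < π) :
    Real.cos (((n : ℝ) + 1/2) * θ)^2 / Real.cos (θ/2)^2 = (Sdir n (π - θ))^2 := by
  have hs : Real.sin ((π - θ)/2) = Real.cos (θ/2) := by
    rw [show (π - θ)/2 = π/2 - θ/2 by ring, Real.sin_pi_div_two_sub]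
  have hcpos : 0 < Real.cos (θ/2) :=
    Real.cos_pos_of_mem_Ioo ⟨by linarith [Real.pi_pos], by linarith⟩
  have hnum : Real.sin (((n:ℝ)+1/2) * (π - θ)) ^ 2 = Real.cos (((n:ℝ)+1/2) * θ)^2 := by
    have e : ((n:ℝ)+1/2) * (π - θ) = ((n:ℝ)*π + π/2) - ((n:ℝ)+1/2)*θ := by ring
    rw [e, Real.sin_sub, Real.sin_add, Real.cos_add]
    simp [Real.sin_nat_mul_pi]
    have h : Real.cos ((n:ℝ)*π)^2 = 1 := by
      nlinarith [Real.sin_sq_add_cos_sq ((n:ℝ)*π), Real.sin_nat_mul_pi n]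
    rw [mul_pow, h, one_mul]
  rw [← hnum, sin_Sdir, hs]
  field_simp

open Real Filter in
theorem Q_strict_mono (n : ℕ) (hn : 1 ≤ n) :
    StrictMonoOn (fun θ : ℝ => Real.cos (((n : ℝ) + 1/2) * θ)^2 / Real.cos (θ/2)^2)
      (Set.Ioo ((2 * (n : ℝ) - 1) * π / (2 * (n : ℝ) + 1)) π) ∧
    Real.cos (((n : ℝ) + 1/2) * ((2 * (n : ℝ) - 1) * π / (2 * (n : ℝ) + 1)))^2 /
        Real.cos (((2 * (n : ℝ) - 1) * π / (2 * (n : ℝ) + 1))/2)^2 = 0 ∧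
    Tendsto (fun θ : ℝ => Real.cos (((n : ℝ) + 1/2) * θ)^2 / Real.cos (θ/2)^2)
      (nhdsWithin π (Set.Ioo ((2 * (n : ℝ) - 1) * π / (2 * (n : ℝ) + 1)) π))
      (nhds ((2 * (n : ℝ) + 1)^2)) := by
  have hd : (0:ℝ) < 2 * (n:ℝ) + 1 := by positivity
  have hn1 : (1:ℝ) ≤ (n:ℝ) := by exact_mod_cast hn
  have hL0 : 0 < (2 * (n:ℝ) - 1) * π / (2 * (n:ℝ) + 1) :=
    div_pos (by nlinarith [Real.pi_pos]) hd
  have hmem : ∀ θ ∈ Set.Ioo ((2 * (n:ℝ) - 1) * π / (2 * (n:ℝ) + 1)) π,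
      0 < π - θ ∧ π - θ < 2 * π / (2 * (n:ℝ) + 1) ∧ 0 < θ := by
    intro θ hθ
    obtain ⟨hθ1, hθ2⟩ := hθ
    have h1 : (2 * (n:ℝ) - 1) * π < θ * (2 * (n:ℝ) + 1) := (div_lt_iff₀ hd).mp hθ1
    refine ⟨by linarith, ?_, lt_trans hL0 hθ1⟩
    rw [lt_div_iff₀ hd]; nlinarith
  refine ⟨?_, ?_, ?_⟩
  · intro θ₁ h₁ θ₂ h₂ h12
    obtain ⟨a1, b1, c1⟩ := hmem θ₁ h₁
    obtain ⟨a2, b2, c2⟩ := hmem θ₂ h₂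
    simp only
    rw [Q_eq n c1 h₁.2, Q_eq n c2 h₂.2]
    have hlt : Sdir n (π - θ₁) < Sdir n (π - θ₂) := Sdir_anti n hn a2 (by linarith) b1
    have hpos : 0 < Sdir n (π - θ₁) := Sdir_pos n _ a1 b1
    nlinarith
  · have harg : ((n:ℝ)+1/2) * ((2 * (n:ℝ) - 1) * π / (2 * (n:ℝ) + 1)) = (n:ℝ)*π - π/2 := by
      field_simp
    rw [harg, Real.cos_sub]
    simp [Real.sin_nat_mul_pi]
  · have hcont : Continuous (fun θ : ℝ => (Sdir n (π - θ))^2) := by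
      unfold Sdir
      fun_prop
    have hval : Sdir n 0 = 2*(n:ℝ)+1 := by
      simp [Sdir]; ring
    apply tendsto_nhdsWithin_congr (fun θ hθ => (Q_eq n (hmem θ hθ).2.2 hθ.2).symm)
    have h := (hcont.tendsto π).mono_left
      (nhdsWithin_le_nhds (s := Set.Ioo ((2 * (n:ℝ) - 1) * π / (2 * (n:ℝ) + 1)) π))
    simpa [hval] using h
end

section
/- For positive reals a, b and θ = (2m+1)π/(2n+1) with 0 ≤ m ≤ n integers, the condition that there exists a real α with cos θ = 1 − (2ab/((a+1)(b+1)))·sin²(α/2) is equivalent to 1 + a + b ≤ ab·cot²(θ/2); in particular θ = π (the case m = n) is impossible since it would require 1 + a + b ≤ 0. -/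
open Real in
theorem allowed_region_31n (a b : ℝ) (ha : 0 < a) (hb : 0 < b)
    (n m : ℕ) (hmn : m ≤ n) (θ : ℝ)
    (hθ : θ = (2 * (m : ℝ) + 1) * π / (2 * (n : ℝ) + 1)) :
    ((∃ α : ℝ, Real.cos θ =
        1 - (2 * a * b / ((a + 1) * (b + 1))) * Real.sin (α/2)^2) ↔
      1 + a + b ≤ a * b * Real.cot (θ/2)^2) ∧
    (θ = π → ¬ ∃ α : ℝ, Real.cos θ =
        1 - (2 * a * b / ((a + 1) * (b + 1))) * Real.sin (α/2)^2) := by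
  have hπ := Real.pi_pos
  have hθpos : 0 < θ := by rw [hθ]; positivity
  have hθle : θ ≤ π := by
    rw [hθ, div_le_iff₀ (by positivity)]
    have hm : (m : ℝ) ≤ (n : ℝ) := Nat.cast_le.mpr hmn
    nlinarith
  set s := Real.sin (θ/2) with hs
  have hspos : 0 < s := Real.sin_pos_of_pos_of_lt_pi (by linarith) (by linarith)
  have hsle : s ≤ 1 := Real.sin_le_one _
  have hpyth : s ^ 2 + Real.cos (θ/2) ^ 2 = 1 := Real.sin_sq_add_cos_sq _
  have hcos2 : Real.cos (θ/2) ^ 2 = 1 - s ^ 2 := by linarith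
  have hcosθ : Real.cos θ = 1 - 2 * s ^ 2 := by
    have h := Real.cos_sq (θ/2)
    rw [show 2*(θ/2) = θ by ring] at h
    linarith
  have hcot : Real.cot (θ/2) ^ 2 = (1 - s ^ 2) / s ^ 2 := by
    rw [Real.cot_eq_cos_div_sin, div_pow, hcos2]
  set k : ℝ := 2 * a * b / ((a + 1) * (b + 1)) with hk
  have hkpos : 0 < k := by positivity
  -- main iff
  have key : (∃ α : ℝ, Real.cos θ = 1 - k * Real.sin (α/2)^2) ↔
      1 + a + b ≤ a * b * Real.cot (θ/2)^2 := by
    constructor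
    · rintro ⟨α, hα⟩
      have ht0 : 0 ≤ Real.sin (α/2)^2 := sq_nonneg _
      have ht1 : Real.sin (α/2)^2 ≤ 1 := by
        have := Real.sin_le_one (α/2); have := Real.neg_one_le_sin (α/2); nlinarith
      have h1 : 1 - Real.cos θ ≤ k := by nlinarith
      -- 2 s^2 ≤ k
      have h2 : 2 * s ^ 2 * ((a+1)*(b+1)) ≤ 2 * a * b := by
        rw [hk] at h1
        rw [hcosθ] at h1
        have hab : (0:ℝ) < (a+1)*(b+1) := by positivity
        calc 2 * s ^ 2 * ((a+1)*(b+1)) ≤ (2*a*b/((a+1)*(b+1))) * ((a+1)*(b+1)) := by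
              apply mul_le_mul_of_nonneg_right (by linarith) (le_of_lt hab)
          _ = 2 * a * b := by field_simp
      have hs2 : 0 < s ^ 2 := by positivity
      rw [hcot, ← mul_div_assoc, le_div_iff₀ hs2]
      nlinarith
    · intro h
      have hs2 : 0 < s ^ 2 := by positivity
      have h2 : (1 + a + b) * s ^ 2 ≤ a * b * (1 - s ^ 2) := by
        rw [hcot, ← mul_div_assoc, le_div_iff₀ hs2] at h
        exact h
      have hk1 : 2 * s ^ 2 ≤ k := by
        rw [hk, le_div_iff₀ (by positivity)]
        nlinarith
      set t : ℝ := 2 * s ^ 2 / k with htdef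
      have ht0 : 0 ≤ t := by positivity
      have ht1 : t ≤ 1 := by rw [htdef, div_le_one hkpos]; exact hk1
      refine ⟨2 * Real.arcsin (Real.sqrt t), ?_⟩
      have hsq : Real.sqrt t ≤ 1 := by
        rw [show (1:ℝ) = Real.sqrt 1 by simp]; exact Real.sqrt_le_sqrt ht1
      have : Real.sin (2 * Real.arcsin (Real.sqrt t) / 2) = Real.sqrt t := by
        rw [mul_div_cancel_left₀ _ (two_ne_zero)]
        exact Real.sin_arcsin (by linarith [Real.sqrt_nonneg t]) hsq
      rw [this, Real.sq_sqrt ht0, hcosθ, htdef]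
      field_simp
  refine ⟨key, fun hπeq => ?_⟩
  rw [key]
  intro h
  have : Real.cot (π/2) = 0 := by
    rw [Real.cot_eq_cos_div_sin, Real.cos_pi_div_two]; simp
  rw [hπeq, this] at h
  nlinarith
end

section
/- There do not exist positive reals a, b, v, w and a real α with |α| < π/2 such that (2b/(1+b))·((2bw·cos α)/(a+b) − v − w) > (2bw·cos α)/(a+b) − v > 0. -/
private lemma aux_key (a b v w α : ℝ) (ha : 0 < a) (hb : 0 < b) (hv : 0 < v)
    (hw : 0 < w)
    (h1 : (2*b/(1+b)) * ((2*b*w*Real.cos α)/(a+b) - v - w) > (2*b*w*Real.cos α)/(a+b) - v)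
    (h2 : (2*b*w*Real.cos α)/(a+b) - v > 0) :
    (b - 1) * Real.cos α > a + b := by
  set c := Real.cos α with hc
  have hab : (0:ℝ) < a + b := by linarith
  have h1b : (0:ℝ) < 1 + b := by linarith
  set d := (2*b*w*c)/(a+b) with hd
  have hdd : d * (a+b) = 2*b*w*c := div_mul_cancel₀ _ (ne_of_gt hab)
  -- multiply h1 by (1+b)
  have h1' : 2*b * (d - v - w) > (d - v) * (1+b) := by
    have := mul_lt_mul_of_pos_right h1 h1b
    calc (d - v) * (1+b) < (2*b/(1+b)) * (d - v - w) * (1+b) := this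
      _ = 2*b * (d - v - w) := by field_simp
  have hbv : (b - 1) * (d - v) > 2*b*w := by nlinarith
  have hb1 : 1 < b := by nlinarith
  have hlt : (d - v) * (a+b) < 2*b*w*c := by nlinarith
  nlinarith [mul_lt_mul_of_pos_left hlt (by linarith : (0:ℝ) < b - 1),
    mul_lt_mul_of_pos_right hbv hab, mul_pos hb hw]

open Real in
theorem no_32313_sequence :
    (¬ ∃ a b v w α : ℝ, 0 < a ∧ 0 < b ∧ 0 < v ∧ 0 < w ∧ |α| < π/2 ∧
        (2*b/(1+b)) * ((2*b*w*Real.cos α)/(a+b) - v - w) > (2*b*w*Real.cos α)/(a+b) - v ∧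
        (2*b*w*Real.cos α)/(a+b) - v > 0) ∧
    (∀ a b v w α : ℝ, 0 < a → 0 < b → 0 < v → 0 < w → |α| < π/2 →
        (2*b/(1+b)) * ((2*b*w*Real.cos α)/(a+b) - v - w) > (2*b*w*Real.cos α)/(a+b) - v →
        (2*b*w*Real.cos α)/(a+b) - v > 0 →
        (b - 1) * Real.cos α > a + b) := by
  constructor
  · rintro ⟨a, b, v, w, α, ha, hb, hv, hw, hα, h1, h2⟩
    have key := aux_key a b v w α ha hb hv hw h1 h2
    have hc1 : Real.cos α ≤ 1 := Real.cos_le_one α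
    have hcp : 0 < Real.cos α := Real.cos_pos_of_mem_Ioo (by constructor <;> [linarith [abs_lt.mp hα]; linarith [abs_lt.mp hα]])
    nlinarith [key, hc1, hcp]
  · intro a b v w α ha hb hv hw hα h1 h2
    exact aux_key a b v w α ha hb hv hw h1 h2
end
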